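/- Let G be an abelian group and f : G → ℂ. Suppose there exists δ > 0 with |f(x+y) + f(x−y) − 2·f(x)·f(y)| ≤ δ for all x, y ∈ G. Then either |f(x)| ≤ (1 + √(1+2δ))/2 for all x, or f satisfies the d'Alembert (cosine) equation f(x+y) + f(x−y) = 2·f(x)·f(y) for all x, y ∈ G. -/

import Mathlib

/-!
Write `D f x y = f (x + y) + f (x - y) - 2 f(x) f(y)` and `M = (1 + √(1 + 2δ)) / 2`, the positive
root of `2t² - 2t = δ`. A five-term identity expresses `2 f(w) D f x y` through values of `D f`
and `f y`, so `2 ‖f w‖ ‖D f x y‖ ≤ (4 + 2 ‖f y‖) δ` for every `w`: if `f` is unbounded, `D f = 0`.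
On the other hand `‖f 0‖ ≤ M`, and `D f x x` gives `‖f (2x)‖ ≥ 2 ‖f x‖² - M - δ`, so the excess of
`‖f x‖` over `M` at least doubles under `x ↦ 2x`: a single value above `M` makes `f` unbounded.
-/

open Set

section DAlembert

variable {G 𝕜 : Type*} [AddCommGroup G] [RCLike 𝕜] {f : G → 𝕜} {δ : ℝ}

def dAlembertDefect (f : G → 𝕜) (x y : G) : 𝕜 :=
  f (x + y) + f (x - y) - 2 * f x * f y

theorem two_mul_mul_dAlembertDefect (f : G → 𝕜) (w x y : G) :
    2 * f w * dAlembertDefect f x y =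
      dAlembertDefect f (w + x) y + dAlembertDefect f (w - x) y - dAlembertDefect f w (x + y)
        - dAlembertDefect f w (x - y) + 2 * f y * dAlembertDefect f w x := by
  simp only [dAlembertDefect]
  rw [show w + (x + y) = w + x + y by abel, show w - (x + y) = w - x - y by abel,
    show w + (x - y) = w + x - y by abel, show w - (x - y) = w - x + y by abel]
  ring

theorem mul_norm_dAlembertDefect_le (hD : ∀ x y, ‖dAlembertDefect f x y‖ ≤ δ) (w x y : G) :
    2 * ‖f w‖ * ‖dAlembertDefect f x y‖ ≤ (4 + 2 * ‖f y‖) * δ := by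
  have hnorm := congrArg norm (two_mul_mul_dAlembertDefect f w x y)
  simp only [norm_mul, RCLike.norm_two] at hnorm
  set A := dAlembertDefect f (w + x) y
  set B := dAlembertDefect f (w - x) y
  set C := dAlembertDefect f w (x + y)
  set E := dAlembertDefect f w (x - y)
  have h₁ := norm_add_le (A + B - C - E) (2 * f y * dAlembertDefect f w x)
  have h₂ := norm_sub_le (A + B - C) E
  have h₃ := norm_sub_le (A + B) C
  have h₄ := norm_add_le A B
  simp only [norm_mul, RCLike.norm_two] at h₁
  have h₅ := mul_le_mul_of_nonneg_left (hD w x) (by positivity : 0 ≤ 2 * ‖f y‖)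
  linarith [hD (w + x) y, hD (w - x) y, hD w (x + y), hD w (x - y)]

theorem dAlembertDefect_eq_zero_of_not_bddAbove (hD : ∀ x y, ‖dAlembertDefect f x y‖ ≤ δ)
    (hf : ¬BddAbove (range fun x => ‖f x‖)) (x y : G) : dAlembertDefect f x y = 0 := by
  by_contra hE
  have hE : 0 < 2 * ‖dAlembertDefect f x y‖ := by positivity
  refine hf ⟨(4 + 2 * ‖f y‖) * δ / (2 * ‖dAlembertDefect f x y‖), ?_⟩
  rintro _ ⟨w, rfl⟩
  rw [le_div_iff₀ hE]
  linarith [mul_norm_dAlembertDefect_le hD w x y]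

theorem le_of_two_mul_sq_sub_two_mul_le {t : ℝ} (h : 2 * t ^ 2 - 2 * t ≤ δ) :
    t ≤ (1 + √(1 + 2 * δ)) / 2 := by
  have := Real.abs_le_sqrt (x := 2 * t - 1) (y := 1 + 2 * δ) (by nlinarith)
  linarith [le_abs_self (2 * t - 1)]

theorem norm_apply_zero_le (hD : ∀ x y, ‖dAlembertDefect f x y‖ ≤ δ) :
    ‖f 0‖ ≤ (1 + √(1 + 2 * δ)) / 2 := by
  apply le_of_two_mul_sq_sub_two_mul_le
  have h₀ := hD 0 0
  rw [dAlembertDefect, add_zero, sub_zero] at h₀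
  have h₁ := norm_sub_norm_le (2 * f 0 * f 0) (f 0 + f 0)
  rw [norm_sub_rev] at h₁
  simp only [norm_mul, RCLike.norm_two] at h₁
  linarith [norm_add_le (f 0) (f 0)]

theorem two_mul_norm_sq_sub_le_norm_apply_add_self (hD : ∀ x y, ‖dAlembertDefect f x y‖ ≤ δ)
    (x : G) : 2 * ‖f x‖ ^ 2 - ‖f 0‖ - δ ≤ ‖f (x + x)‖ := by
  have hx : 2 * f x * f x = f (x + x) + f 0 - dAlembertDefect f x x := by
    simp [dAlembertDefect]
  have h₁ := norm_sub_le (f (x + x) + f 0) (dAlembertDefect f x x)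
  have h₂ := norm_add_le (f (x + x)) (f 0)
  rw [← hx] at h₁
  simp only [norm_mul, RCLike.norm_two] at h₁
  nlinarith [hD x x]

theorem add_two_mul_le_norm_apply_add_self (hD : ∀ x y, ‖dAlembertDefect f x y‖ ≤ δ)
    {x : G} {c : ℝ} (hc : 0 ≤ c) (hx : (1 + √(1 + 2 * δ)) / 2 + c ≤ ‖f x‖) :
    (1 + √(1 + 2 * δ)) / 2 + 2 * c ≤ ‖f (x + x)‖ := by
  have hδ : 0 ≤ 1 + 2 * δ := by linarith [(norm_nonneg _).trans (hD 0 0)]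
  have hs := Real.sq_sqrt hδ
  have hs₀ := Real.sqrt_nonneg (1 + 2 * δ)
  have hsq := pow_le_pow_left₀ (by positivity) hx 2
  nlinarith [two_mul_norm_sq_sub_le_norm_apply_add_self hD x, norm_apply_zero_le hD]

theorem not_bddAbove_of_lt_norm (hD : ∀ x y, ‖dAlembertDefect f x y‖ ≤ δ) {a : G}
    (ha : (1 + √(1 + 2 * δ)) / 2 < ‖f a‖) : ¬BddAbove (range fun x => ‖f x‖) := by
  set M := (1 + √(1 + 2 * δ)) / 2
  have hc : 0 < ‖f a‖ - M := sub_pos.mpr ha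
  have grow (n : ℕ) : M + 2 ^ n * (‖f a‖ - M) ≤ ‖f ((fun x => x + x)^[n] a)‖ := by
    induction n with
    | zero => simp
    | succ n ih =>
      rw [Function.iterate_succ_apply', pow_succ, mul_comm _ 2, mul_assoc]
      exact add_two_mul_le_norm_apply_add_self hD (by positivity) ih
  rintro ⟨B, hB⟩
  obtain ⟨n, hn⟩ := pow_unbounded_of_one_lt ((B - M) / (‖f a‖ - M)) one_lt_two
  rw [div_lt_iff₀ hc] at hn
  linarith [grow n, hB ⟨(fun x => x + x)^[n] a, rfl⟩]

end DAlembert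

theorem stmt_3_general (G : Type*) [AddCommGroup G] (f : G → ℂ)
    (δ : ℝ)
    (h : ∀ x y : G, ‖f (x + y) + f (x - y) - 2 * f x * f y‖ ≤ δ) :
    (∀ x : G, ‖f x‖ ≤ (1 + Real.sqrt (1 + 2 * δ)) / 2) ∨
    (∀ x y : G, f (x + y) + f (x - y) = 2 * f x * f y) := by
  refine or_iff_not_imp_left.mpr fun hbdd => ?_
  obtain ⟨a, ha⟩ := not_forall.mp hbdd
  exact fun x y => sub_eq_zero.mp <|
    dAlembertDefect_eq_zero_of_not_bddAbove h (not_bddAbove_of_lt_norm h (not_le.mp ha)) x y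

theorem stmt_3 (G : Type*) [AddCommGroup G] (f : G → ℂ)
    (δ : ℝ) (hδ : 0 < δ)
    (h : ∀ x y : G, ‖f (x + y) + f (x - y) - 2 * f x * f y‖ ≤ δ) :
    (∀ x : G, ‖f x‖ ≤ (1 + Real.sqrt (1 + 2 * δ)) / 2) ∨
    (∀ x y : G, f (x + y) + f (x - y) = 2 * f x * f y) :=
  stmt_3_general G f δ h
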